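/- arXiv:1909.07538 — 6 statements merged into one kernel-verified Lean document; each statement's English description precedes it below -/
import Mathlib

section
/- Let ≈ be a substring consistent equivalence relation (SCER) on strings over Σ and let f : Σ* → Π* be a prefix encoding with respect to ≈. If P and P' are strings with 1 ≤ j ≤ |P|, 1 ≤ j' ≤ |P'|, and f(P)[:j] = f(P')[:j'], then j = j' and, for every 1 ≤ l ≤ j + 1, f(P[l:j]) = f(P'[l:j]). Consequently the re-encoded suffixes of a state, and hence the failure function and the output function of the SCER automaton, depend only on the state and not on the choice of representative pattern and position. -/
/-!
Since `f` preserves length, equal prefixes of `f P` and `f P'` have equal length `j`, and by the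
prefix property they are `f (P.take j)` and `f (P'.take j)`; hence `P.take j ≈ P'.take j`, and
substring consistency passes this on to the suffixes `P[l:j] ≈ P'[l:j]`.
-/

/-- The substring `X[i:j]` (1-indexed, inclusive; `ε` when `j < i`). -/
def seg {σ : Type*} (X : List σ) (i j : ℕ) : List σ := (X.take j).drop (i - 1)

theorem seg_take_self {σ : Type*} (X : List σ) (l j : ℕ) : seg (X.take j) l j = seg X l j := by
  simp only [seg, List.take_take, min_self]

theorem seg_succ_self {σ : Type*} (X : List σ) (j : ℕ) : seg X (j + 1) j = [] := by
  simp only [seg, add_tsub_cancel_right, List.drop_eq_nil_iff, List.length_take]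
  exact min_le_left _ _

section PrefixEncoding

variable {σ π : Type*} (f : List σ → List π)

theorem eq_of_take_encode_eq (hf1 : ∀ X, (f X).length = X.length) {P P' : List σ} {j j' : ℕ}
    (hjP : j ≤ P.length) (hj'P : j' ≤ P'.length) (heq : (f P).take j = (f P').take j') :
    j = j' := by
  simpa [List.length_take, hf1, hjP, hj'P] using congrArg List.length heq

theorem encode_seg_eq_of_encode_eq (R : List σ → List σ → Prop)
    (hsub : ∀ X Y, R X Y → ∀ i j, 1 ≤ i → i ≤ j → j ≤ X.length →
      R (seg X i j) (seg Y i j))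
    (hf3 : ∀ X Y, f X = f Y ↔ R X Y) {X Y : List σ} (h : f X = f Y) {l j : ℕ}
    (hl : 1 ≤ l) (hlj : l ≤ j + 1) (hjX : j ≤ X.length) :
    f (seg X l j) = f (seg Y l j) := by
  rcases Nat.lt_or_ge l (j + 1) with hlt | hge
  · exact (hf3 _ _).2 <| hsub X Y ((hf3 X Y).1 h) l j hl (Nat.lt_succ_iff.mp hlt) hjX
  · obtain rfl : l = j + 1 := le_antisymm hlj hge
    rw [seg_succ_self, seg_succ_self]

end PrefixEncoding

theorem state_well_defined_general {σ π : Type*} (R : List σ → List σ → Prop)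
    (hsub : ∀ X Y, R X Y → ∀ i j, 1 ≤ i → i ≤ j → j ≤ X.length →
      R (seg X i j) (seg Y i j))
    (f : List σ → List π)
    (hf1 : ∀ X, (f X).length = X.length)
    (hf2 : ∀ (X : List σ) (i : ℕ), 1 ≤ i → i ≤ X.length →
      f (X.take i) = (f X).take i)
    (hf3 : ∀ X Y, f X = f Y ↔ R X Y)
    (P P' : List σ) (j j' : ℕ)
    (hj : 1 ≤ j) (hjP : j ≤ P.length) (hj'P : j' ≤ P'.length)
    (heq : (f P).take j = (f P').take j') :
    j = j' ∧ ∀ l, 1 ≤ l → l ≤ j + 1 → f (seg P l j) = f (seg P' l j) := by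
  obtain rfl := eq_of_take_encode_eq f hf1 hjP hj'P heq
  have htake : f (P.take j) = f (P'.take j) := by
    rw [hf2 P j hj hjP, hf2 P' j hj hj'P, heq]
  refine ⟨rfl, fun l hl hlj => ?_⟩
  rw [← seg_take_self P, ← seg_take_self P']
  exact encode_seg_eq_of_encode_eq f R hsub hf3 htake hl hlj (by simp [hjP])

/-- Let `R` be an SCER and `f` a prefix encoding with respect to `R`.
If `P, P'` are strings with `1 ≤ j ≤ |P|`, `1 ≤ j' ≤ |P'|` and
`f(P)[:j] = f(P')[:j']`, then `j = j'` and for every `1 ≤ l ≤ j + 1` the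
re-encoded suffixes agree: `f(P[l:j]) = f(P'[l:j])`.  Hence the re-encoded
suffixes of a state (and so the failure and output functions of the SCER
automaton) depend only on the state, not on the representative. -/
theorem state_well_defined {σ π : Type*} (R : List σ → List σ → Prop)
    (hequiv : Equivalence R)
    (hlen : ∀ X Y, R X Y → X.length = Y.length)
    (hsub : ∀ X Y, R X Y → ∀ i j, 1 ≤ i → i ≤ j → j ≤ X.length →
      R (seg X i j) (seg Y i j))
    (f : List σ → List π)
    (hf1 : ∀ X, (f X).length = X.length)
    (hf2 : ∀ (X : List σ) (i : ℕ), 1 ≤ i → i ≤ X.length →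
      f (X.take i) = (f X).take i)
    (hf3 : ∀ X Y, f X = f Y ↔ R X Y)
    (P P' : List σ) (j j' : ℕ)
    (hj : 1 ≤ j) (hjP : j ≤ P.length) (hj' : 1 ≤ j') (hj'P : j' ≤ P'.length)
    (heq : (f P).take j = (f P').take j') :
    j = j' ∧ ∀ l, 1 ≤ l → l ≤ j + 1 → f (seg P l j) = f (seg P' l j) :=
  state_well_defined_general R hsub f hf1 hf2 hf3 P P' j j' hj hjP hj'P heq
end

section
/- (Lemma 2 of the paper.) Let ≈ be an SCER on strings over Σ, f a prefix encoding with respect to ≈, and D a dictionary. For every P_k ∈ D, every 1 ≤ j ≤ |P_k|, and every 1 ≤ i ≤ j + 1: if f(P_k[i:j]) ∈ Pref(f(D)), then there exists q ≥ 0 such that Fail^q(f(P_k)[:j]) = f(P_k[i:j]). -/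
/-- `Pref(f(D))`: the set of all prefixes (including `ε`) of the encoded
patterns; these are the states of the SCER automaton of `D`. -/
def PrefSet {σ π : Type*} (f : List σ → List π) (D : Finset (List σ)) :
    Set (List π) :=
  {S | ∃ P ∈ D, S <+: f P}

/-- The index `i = min {l | 1 < l ≤ j + 1, f(P[l:j]) ∈ Pref(f(D))}` used in the
definition of the failure function. -/
noncomputable def failIdx {σ π : Type*} (f : List σ → List π)
    (D : Finset (List σ)) (P : List σ) (j : ℕ) : ℕ :=
  sInf {l | 1 < l ∧ l ≤ j + 1 ∧ f (seg P l j) ∈ PrefSet f D}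

section PrefixEncoding

variable {σ π : Type*} {f : List σ → List π}

theorem encoding_take (hf1 : ∀ X, (f X).length = X.length)
    (hf2 : ∀ (X : List σ) (i : ℕ), 1 ≤ i → i ≤ X.length → f (X.take i) = (f X).take i)
    (X : List σ) (n : ℕ) : f (X.take n) = (f X).take n := by
  rcases Nat.eq_zero_or_pos n with rfl | hn
  · simpa using hf1 []
  rcases le_or_gt n X.length with hnX | hXn
  · exact hf2 X n hn hnX
  · rw [List.take_of_length_le hXn.le, List.take_of_length_le (by rw [hf1]; exact hXn.le)]

theorem encoding_drop_congr {R : List σ → List σ → Prop}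
    (hsub : ∀ X Y, R X Y → ∀ i j, 1 ≤ i → i ≤ j → j ≤ X.length →
      R (seg X i j) (seg Y i j))
    (hf1 : ∀ X, (f X).length = X.length) (hf3 : ∀ X Y, f X = f Y ↔ R X Y)
    {X Y : List σ} (h : f X = f Y) (d : ℕ) : f (X.drop d) = f (Y.drop d) := by
  have hXY : X.length = Y.length := by rw [← hf1 X, ← hf1 Y, h]
  rcases lt_or_ge d X.length with hd | hd
  · have hR := hsub X Y ((hf3 X Y).1 h) (d + 1) X.length (by omega) hd le_rfl
    have hseg : ∀ Z : List σ, Z.length = X.length → seg Z (d + 1) X.length = Z.drop d := by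
      intro Z hZ
      rw [seg, ← hZ, List.take_length, Nat.add_sub_cancel]
    rwa [← hseg X rfl, ← hseg Y hXY.symm, hf3]
  · rw [List.drop_eq_nil_of_le hd, List.drop_eq_nil_of_le (hXY ▸ hd)]

theorem exists_eq_encoding_take_of_mem_prefSet
    (htake : ∀ (X : List σ) n, f (X.take n) = (f X).take n)
    {D : Finset (List σ)} {S : List π} (hS : S ∈ PrefSet f D) :
    ∃ P ∈ D, S = f (P.take S.length) := by
  obtain ⟨P, hP, hpre⟩ := hS
  exact ⟨P, hP, by rw [htake]; exact List.prefix_iff_eq_take.1 hpre⟩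

theorem failIdx_spec {D : Finset (List σ)} {P : List σ} {n l : ℕ}
    (hl1 : 1 < l) (hln : l ≤ n + 1) (hmem : f (seg P l n) ∈ PrefSet f D) :
    1 < failIdx f D P n ∧ failIdx f D P n ≤ l ∧
      f (seg P (failIdx f D P n) n) ∈ PrefSet f D := by
  have hl : l ∈ {l | 1 < l ∧ l ≤ n + 1 ∧ f (seg P l n) ∈ PrefSet f D} := ⟨hl1, hln, hmem⟩
  obtain ⟨hfail1, -, hfailmem⟩ := Nat.sInf_mem ⟨l, hl⟩
  exact ⟨hfail1, Nat.sInf_le hl, hfailmem⟩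

theorem exists_iterate_fail_eq_encoding_drop_take
    (hf1 : ∀ X, (f X).length = X.length)
    (htake : ∀ (X : List σ) n, f (X.take n) = (f X).take n)
    (hdrop : ∀ X Y : List σ, f X = f Y → ∀ d, f (X.drop d) = f (Y.drop d))
    {D : Finset (List σ)} {Fail : List π → List π}
    (hFail : ∀ P ∈ D, ∀ j : ℕ, 1 ≤ j → j ≤ P.length →
      Fail ((f P).take j) = f (seg P (failIdx f D P j) j))
    (n : ℕ) : ∀ P ∈ D, ∀ k, f ((P.take n).drop k) ∈ PrefSet f D →
      ∃ q, Fail^[q] (f (P.take n)) = f ((P.take n).drop k) := by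
  induction n using Nat.strong_induction_on with
  | _ n IH =>
  intro P hP k hmem
  rcases Nat.eq_zero_or_pos k with rfl | hk
  · exact ⟨0, rfl⟩
  rcases Nat.eq_zero_or_pos n with rfl | hn
  · exact ⟨0, by simp⟩
  rcases lt_or_ge P.length n with hPn | hnP
  · have hT : P.take n = P.take P.length := by
      rw [List.take_of_length_le hPn.le, List.take_length]
    rw [hT] at hmem ⊢
    exact IH _ hPn P hP k hmem
  set T := P.take n
  have hTlen : T.length = n := List.length_take_of_le hnP
  have hdrop_min : T.drop (min k n) = T.drop k := by rw [List.drop_eq_drop_min (i := k), hTlen]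
  -- `T.drop k` is itself a candidate suffix, so `Fail` drops at most `k` letters.
  obtain ⟨hfail1, hfailk, hfailmem⟩ := failIdx_spec (D := D) (P := P) (n := n)
    (l := min k n + 1) (by omega) (by omega) (by rwa [seg, Nat.add_sub_cancel, hdrop_min])
  set k' := failIdx f D P n - 1
  have hstep : Fail (f T) = f (T.drop k') := by rw [htake, hFail P hP n hn hnP, seg]
  rw [seg] at hfailmem
  obtain ⟨P', hP', heq⟩ := exists_eq_encoding_take_of_mem_prefSet htake hfailmem
  set m := (f (T.drop k')).length
  have hm : m < n := by simp only [m, hf1, List.length_drop, hTlen]; omega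
  have hshift : f ((P'.take m).drop (k - k')) = f (T.drop k) := by
    rw [← hdrop _ _ heq, List.drop_drop]
    congr 2
    omega
  obtain ⟨q, hq⟩ := IH m hm P' hP' (k - k') (hshift ▸ hmem)
  exact ⟨q + 1, by rw [Function.iterate_succ_apply, hstep, heq, hq, hshift]⟩

end PrefixEncoding

theorem fail_reaches_suffix_general {σ π : Type*} (R : List σ → List σ → Prop)
    (hsub : ∀ X Y, R X Y → ∀ i j, 1 ≤ i → i ≤ j → j ≤ X.length →
      R (seg X i j) (seg Y i j))
    (f : List σ → List π)
    (hf1 : ∀ X, (f X).length = X.length)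
    (hf2 : ∀ (X : List σ) (i : ℕ), 1 ≤ i → i ≤ X.length →
      f (X.take i) = (f X).take i)
    (hf3 : ∀ X Y, f X = f Y ↔ R X Y)
    (D : Finset (List σ))
    (Fail : List π → List π)
    (hFail : ∀ P ∈ D, ∀ j : ℕ, 1 ≤ j → j ≤ P.length →
      Fail ((f P).take j) = f (seg P (failIdx f D P j) j))
    (P_k : List σ) (hPk : P_k ∈ D) (j i : ℕ)
    (hmem : f (seg P_k i j) ∈ PrefSet f D) :
    ∃ q : ℕ, Fail^[q] ((f P_k).take j) = f (seg P_k i j) := by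
  have htake := encoding_take hf1 hf2
  have hdrop := fun X Y (h : f X = f Y) => encoding_drop_congr hsub hf1 hf3 h
  obtain ⟨q, hq⟩ :=
    exists_iterate_fail_eq_encoding_drop_take hf1 htake hdrop hFail j P_k hPk (i - 1) hmem
  exact ⟨q, by rw [← htake]; exact hq⟩

/-- Lemma 2.  Let `R` be an SCER, `f` a prefix encoding w.r.t. `R`, `D` a
dictionary, and `Fail` the failure function of the SCER automaton (any function
satisfying the defining equation `Fail(f(P)[:j]) = f(P[i:j])` with
`i = min {l | 1 < l ≤ j + 1, f(P[l:j]) ∈ Pref(f(D))}`).  For every `P_k ∈ D`,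
`1 ≤ j ≤ |P_k|` and `1 ≤ i ≤ j + 1`: if `f(P_k[i:j]) ∈ Pref(f(D))`, then there
exists `q ≥ 0` with `Fail^q(f(P_k)[:j]) = f(P_k[i:j])`. -/
theorem fail_reaches_suffix {σ π : Type*} (R : List σ → List σ → Prop)
    (hequiv : Equivalence R)
    (hlen : ∀ X Y, R X Y → X.length = Y.length)
    (hsub : ∀ X Y, R X Y → ∀ i j, 1 ≤ i → i ≤ j → j ≤ X.length →
      R (seg X i j) (seg Y i j))
    (f : List σ → List π)
    (hf1 : ∀ X, (f X).length = X.length)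
    (hf2 : ∀ (X : List σ) (i : ℕ), 1 ≤ i → i ≤ X.length →
      f (X.take i) = (f X).take i)
    (hf3 : ∀ X Y, f X = f Y ↔ R X Y)
    (D : Finset (List σ))
    (Fail : List π → List π)
    (hFail : ∀ P ∈ D, ∀ j : ℕ, 1 ≤ j → j ≤ P.length →
      Fail ((f P).take j) = f (seg P (failIdx f D P j) j))
    (P_k : List σ) (hPk : P_k ∈ D) (j i : ℕ)
    (hj : 1 ≤ j) (hjP : j ≤ P_k.length) (hi : 1 ≤ i) (hij : i ≤ j + 1)
    (hmem : f (seg P_k i j) ∈ PrefSet f D) :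
    ∃ q : ℕ, Fail^[q] ((f P_k).take j) = f (seg P_k i j) :=
  fail_reaches_suffix_general R hsub f hf1 hf2 hf3 D Fail hFail P_k hPk j i hmem
end

section
/- (Lemma 5 of the paper.) Let ≈ be an SCER on strings over Σ, f a prefix encoding with respect to ≈, and D a dictionary. For every state S = f(P_k)[:j] with P_k ∈ D and 1 ≤ j ≤ |P_k| (so S ≠ ε): if S ∈ f(D), then Out(S) = {P ∈ D | f(P) = S} ∪ Out(Fail(S)); otherwise Out(S) = Out(Fail(S)). -/
/-!
A pattern `Q ∈ D` matching the suffix `P[l:j]` satisfies `f Q = f(P[l:j])`. For `l = 1` this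
says `f Q = f(P)[:j]`; for `l > 1` it makes `f(P[l:j]) = f Q` a state, so `l` is at least the
failure index by its minimality. Every match therefore either is the state itself or is
already a match of the failure state.
-/

section

variable {σ π : Type*}

theorem seg_zero_left (X : List σ) (j : ℕ) : seg X 0 j = seg X 1 j := rfl

theorem seg_one_left (X : List σ) (j : ℕ) : seg X 1 j = X.take j := by
  simp [seg]

theorem mem_prefSet_of_mem {f : List σ → List π} {D : Finset (List σ)} {Q : List σ}
    (hQ : Q ∈ D) : f Q ∈ PrefSet f D :=
  ⟨Q, hQ, List.prefix_refl _⟩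

theorem failIdx_le {f : List σ → List π} {D : Finset (List σ)} {P : List σ} {j l : ℕ}
    (hl : 1 < l) (hlj : l ≤ j + 1) (hstate : f (seg P l j) ∈ PrefSet f D) :
    failIdx f D P j ≤ l :=
  Nat.sInf_le ⟨hl, hlj, hstate⟩

/-- The set on the right is `Out (Fail S)` for `S = f(P[:j])`: since `Fail S = f(P[i₀:j])`
with `i₀ = failIdx f D P j`, its matches are the suffixes `P[l:j]` with `i₀ ≤ l`. -/
theorem suffixMatches_eq_union_failIdx {R : List σ → List σ → Prop} {f : List σ → List π}
    (hf : ∀ X Y, f X = f Y ↔ R X Y) (D : Finset (List σ)) (P : List σ) {j : ℕ}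
    (hj : 1 ≤ j) :
    {Q | Q ∈ D ∧ ∃ l, 1 ≤ l ∧ l ≤ j ∧ R Q (seg P l j)} =
      {Q | Q ∈ D ∧ f Q = f (P.take j)} ∪
        {Q | Q ∈ D ∧ ∃ l, failIdx f D P j ≤ l ∧ l ≤ j ∧ R Q (seg P l j)} := by
  ext Q
  simp only [Set.mem_ofPred_eq, Set.mem_union]
  constructor
  · rintro ⟨hQ, l, hl, hlj, hR⟩
    have hfQ : f Q = f (seg P l j) := (hf _ _).mpr hR
    rcases hl.eq_or_lt with rfl | hl
    · exact .inl ⟨hQ, by rw [hfQ, seg_one_left]⟩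
    · refine .inr ⟨hQ, l, failIdx_le hl (by omega) ?_, hlj, hR⟩
      exact hfQ ▸ mem_prefSet_of_mem hQ
  · rintro (⟨hQ, hfQ⟩ | ⟨hQ, l, -, hlj, hR⟩)
    · exact ⟨hQ, 1, le_rfl, hj, (hf _ _).mp (by rw [hfQ, seg_one_left])⟩
    · -- `l = 0` is possible only through the junk value `failIdx = sInf ∅ = 0`.
      rcases Nat.eq_zero_or_pos l with rfl | hl
      · exact ⟨hQ, 1, le_rfl, hj, seg_zero_left P j ▸ hR⟩
      · exact ⟨hQ, l, hl, hlj, hR⟩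

end

theorem out_recurrence_general {σ π : Type*} (R : List σ → List σ → Prop)
    (f : List σ → List π)
    (hf2 : ∀ (X : List σ) (i : ℕ), 1 ≤ i → i ≤ X.length →
      f (X.take i) = (f X).take i)
    (hf3 : ∀ X Y, f X = f Y ↔ R X Y)
    (D : Finset (List σ))
    (P_k : List σ) (j : ℕ)
    (hj : 1 ≤ j) (hjP : j ≤ P_k.length) :
    ((∃ Q ∈ D, f Q = (f P_k).take j) →
      {Q | Q ∈ D ∧ ∃ l, 1 ≤ l ∧ l ≤ j ∧ R Q (seg P_k l j)} =
        {Q | Q ∈ D ∧ f Q = (f P_k).take j} ∪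
          {Q | Q ∈ D ∧ ∃ l, failIdx f D P_k j ≤ l ∧ l ≤ j ∧ R Q (seg P_k l j)}) ∧
    (¬ (∃ Q ∈ D, f Q = (f P_k).take j) →
      {Q | Q ∈ D ∧ ∃ l, 1 ≤ l ∧ l ≤ j ∧ R Q (seg P_k l j)} =
        {Q | Q ∈ D ∧ ∃ l, failIdx f D P_k j ≤ l ∧ l ≤ j ∧ R Q (seg P_k l j)}) := by
  have hout := suffixMatches_eq_union_failIdx hf3 D P_k hj
  rw [hf2 P_k j hj hjP] at hout
  refine ⟨fun _ => hout, fun hnone => ?_⟩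
  have hempty : {Q | Q ∈ D ∧ f Q = (f P_k).take j} = ∅ :=
    Set.eq_empty_iff_forall_notMem.mpr fun Q hQ => hnone ⟨Q, hQ⟩
  rw [hout, hempty, Set.empty_union]

/-- Lemma 5.  Let `R` be an SCER, `f` a prefix encoding w.r.t. `R` and `D` a
dictionary.  Consider a state `S = f(P_k)[:j]` with `P_k ∈ D` and
`1 ≤ j ≤ |P_k|` (so `S ≠ ε`).  Here
`Out S = {Q ∈ D | Q ≈ P_k[l:j] for some 1 ≤ l ≤ j}`, and since
`Fail S = f(P_k[i₀:j])` with `i₀ = failIdx f D P_k j`, its output set is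
`Out (Fail S) = {Q ∈ D | Q ≈ P_k[l:j] for some i₀ ≤ l ≤ j}`.  Then:
if `S ∈ f(D)` then `Out S = {P ∈ D | f P = S} ∪ Out (Fail S)`,
and otherwise `Out S = Out (Fail S)`. -/
theorem out_recurrence {σ π : Type*} (R : List σ → List σ → Prop)
    (hequiv : Equivalence R)
    (hlen : ∀ X Y, R X Y → X.length = Y.length)
    (hsub : ∀ X Y, R X Y → ∀ i j, 1 ≤ i → i ≤ j → j ≤ X.length →
      R (seg X i j) (seg Y i j))
    (f : List σ → List π)
    (hf1 : ∀ X, (f X).length = X.length)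
    (hf2 : ∀ (X : List σ) (i : ℕ), 1 ≤ i → i ≤ X.length →
      f (X.take i) = (f X).take i)
    (hf3 : ∀ X Y, f X = f Y ↔ R X Y)
    (D : Finset (List σ))
    (P_k : List σ) (hPk : P_k ∈ D) (j : ℕ)
    (hj : 1 ≤ j) (hjP : j ≤ P_k.length) :
    ((∃ Q ∈ D, f Q = (f P_k).take j) →
      {Q | Q ∈ D ∧ ∃ l, 1 ≤ l ∧ l ≤ j ∧ R Q (seg P_k l j)} =
        {Q | Q ∈ D ∧ f Q = (f P_k).take j} ∪
          {Q | Q ∈ D ∧ ∃ l, failIdx f D P_k j ≤ l ∧ l ≤ j ∧ R Q (seg P_k l j)}) ∧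
    (¬ (∃ Q ∈ D, f Q = (f P_k).take j) →
      {Q | Q ∈ D ∧ ∃ l, 1 ≤ l ∧ l ≤ j ∧ R Q (seg P_k l j)} =
        {Q | Q ∈ D ∧ ∃ l, failIdx f D P_k j ≤ l ∧ l ≤ j ∧ R Q (seg P_k l j)}) :=
  out_recurrence_general R f hf2 hf3 D P_k j hj hjP
end

section
/- (Correctness of dictionary matching via the output function, from the proof of Theorem 2.) Let ≈ be an SCER on strings over Σ, f a prefix encoding with respect to ≈, D a dictionary, and T a text. For 1 ≤ i ≤ |T|, let V(i) = f(T[i−L(i)+1:i]) where L(i) is the largest s ≥ 0 with f(T[i−s+1:i]) ∈ Pref(f(D)). Then for every pattern P ∈ D and every position o with 1 ≤ o ≤ |T| − |P| + 1: P ≈ T[o:o+|P|−1] if and only if P ∈ Out(V(o+|P|−1)), where for V(i) = f(T[j:i]) one defines Out(V(i)) = {Q ∈ D | Q ≈ T[l:i] for some j ≤ l ≤ i}. -/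
/-- `L(i)`: the largest length `s ≥ 0` of a suffix `T[i-s+1:i]` of `T[:i]`
whose encoding lies in `Pref(f(D))`. -/
noncomputable def Llen {σ π : Type*} (f : List σ → List π)
    (D : Finset (List σ)) (T : List σ) (i : ℕ) : ℕ :=
  sSup {s | s ≤ i ∧ f (seg T (i - s + 1) i) ∈ PrefSet f D}

/-!
For the forward direction, `T[o:o+|P|-1]` encodes to `f P ∈ Pref(f(D))`, so `L(o+|P|-1) ≥ |P|`
and `l = o` is a witness. For the converse, `≈` preserves length, and the only suffix of
`T[:o+|P|-1]` of length `|P|` starts at `o`.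
-/

theorem length_seg {σ : Type*} (X : List σ) (i j : ℕ) :
    (seg X i j).length = min j X.length - (i - 1) := by
  simp [seg]

theorem self_mem_PrefSet {σ π : Type*} (f : List σ → List π) {D : Finset (List σ)}
    {P : List σ} (hP : P ∈ D) : f P ∈ PrefSet f D :=
  ⟨P, hP, List.prefix_refl _⟩

theorem le_Llen {σ π : Type*} {f : List σ → List π} {D : Finset (List σ)} {T : List σ}
    {i s : ℕ} (hs : s ≤ i) (hpref : f (seg T (i - s + 1) i) ∈ PrefSet f D) :
    s ≤ Llen f D T i :=
  le_csSup ⟨i, fun _ h => h.1⟩ ⟨hs, hpref⟩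

theorem matching_correct_general {σ π : Type*} (R : List σ → List σ → Prop)
    (hlen : ∀ X Y, R X Y → X.length = Y.length)
    (f : List σ → List π)
    (hf3 : ∀ X Y, f X = f Y ↔ R X Y)
    (D : Finset (List σ)) (T : List σ)
    (P : List σ) (hPD : P ∈ D) (hPne : 1 ≤ P.length)
    (o : ℕ) (ho : 1 ≤ o) (hoT : o + P.length ≤ T.length + 1) :
    R P (seg T o (o + P.length - 1)) ↔
      (P ∈ D ∧ ∃ l,
        (o + P.length - 1) - Llen f D T (o + P.length - 1) + 1 ≤ l ∧
        l ≤ o + P.length - 1 ∧ R P (seg T l (o + P.length - 1))) := by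
  constructor
  · intro h
    have hL : P.length ≤ Llen f D T (o + P.length - 1) := by
      apply le_Llen (by omega)
      rw [show o + P.length - 1 - P.length + 1 = o by omega, ← (hf3 _ _).mpr h]
      exact self_mem_PrefSet f hPD
    exact ⟨hPD, o, by omega, by omega, h⟩
  · rintro ⟨-, l, hl, hli, h⟩
    have hPl := hlen _ _ h
    rw [length_seg] at hPl
    obtain rfl : l = o := by omega
    exact h

/-- Correctness of dictionary matching via the output function (from the proof
of Theorem 2).  Let `R` be an SCER, `f` a prefix encoding w.r.t. `R`, `D` a
dictionary and `T` a text.  For `1 ≤ i ≤ |T|`, the state reached after reading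
`T[:i]` is `V(i) = f(T[i-L(i)+1:i])`, whose output set is
`Out(V(i)) = {Q ∈ D | Q ≈ T[l:i] for some i-L(i)+1 ≤ l ≤ i}`.  Then for every
(nonempty) pattern `P ∈ D` and every position `o` with
`1 ≤ o ≤ |T| - |P| + 1`:  `P ≈ T[o:o+|P|-1]` iff `P ∈ Out(V(o+|P|-1))`. -/
theorem matching_correct {σ π : Type*} (R : List σ → List σ → Prop)
    (hequiv : Equivalence R)
    (hlen : ∀ X Y, R X Y → X.length = Y.length)
    (hsub : ∀ X Y, R X Y → ∀ i j, 1 ≤ i → i ≤ j → j ≤ X.length →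
      R (seg X i j) (seg Y i j))
    (f : List σ → List π)
    (hf1 : ∀ X, (f X).length = X.length)
    (hf2 : ∀ (X : List σ) (i : ℕ), 1 ≤ i → i ≤ X.length →
      f (X.take i) = (f X).take i)
    (hf3 : ∀ X Y, f X = f Y ↔ R X Y)
    (D : Finset (List σ)) (T : List σ)
    (P : List σ) (hPD : P ∈ D) (hPne : 1 ≤ P.length)
    (o : ℕ) (ho : 1 ≤ o) (hoT : o + P.length ≤ T.length + 1) :
    R P (seg T o (o + P.length - 1)) ↔
      (P ∈ D ∧ ∃ l,
        (o + P.length - 1) - Llen f D T (o + P.length - 1) + 1 ≤ l ∧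
        l ≤ o + P.length - 1 ∧ R P (seg T l (o + P.length - 1))) :=
  matching_correct_general R hlen f hf3 D T P hPD hPne o ho hoT
end

section
/- The prev-encoding characterizes parameterized matching: for strings X, Y over an alphabet Π, prev(X) = prev(Y) if and only if there exists a bijection π : Π → Π such that Y = π(X) (i.e., Y[i] = π(X[i]) for all i). Hence the prev-encoding is a prefix encoding with respect to the parameterized-matching relation. -/
open Classical

/-- The prev-encoding: `prev(X)[i] = i - max{j | 1 ≤ j < i, X[j] = X[i]}` if
such a `j` exists, and `0` otherwise (positions 1-indexed; here computed with
0-indexed positions `k`, which yields the same distances). -/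
noncomputable def prevEnc {Γ : Type*} (X : List Γ) : List ℕ :=
  (List.range X.length).map fun k =>
    if (∃ j, j < k ∧ X[j]? = X[k]?) then
      k - sSup {j | j < k ∧ X[j]? = X[k]?}
    else 0

/-!
Scanning a string from left to right, `prev` records at each position either that its letter is
fresh (`0`) or the position of the letter's previous occurrence. So if `prev(X) = prev(Y)`, a
renaming of the letters that carries a prefix of `X` to the prefix of `Y` extends by one letter:
a repeated letter must be renamed as before, while a fresh letter of `X` faces a fresh letter of
`Y`, and composing with a transposition sends one to the other without disturbing the prefix.
-/

section

variable {Γ Γ' : Type*}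

/-- The entry `prev(X)[k + 1]` of the prev-encoding (`k` is a 0-indexed position). -/
noncomputable def prevEntry (X : List Γ) (k : ℕ) : ℕ :=
  if ∃ j, j < k ∧ X[j]? = X[k]? then k - sSup {j | j < k ∧ X[j]? = X[k]?} else 0

theorem prevEnc_eq_map_prevEntry (X : List Γ) :
    prevEnc X = (List.range X.length).map (prevEntry X) := rfl

@[simp]
theorem length_prevEnc (X : List Γ) : (prevEnc X).length = X.length := by
  simp [prevEnc]

theorem prevEntry_congr {X : List Γ} {Y : List Γ'} {k : ℕ}
    (h : ∀ j < k, X[j]? = X[k]? ↔ Y[j]? = Y[k]?) : prevEntry X k = prevEntry Y k := by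
  have hpred : (fun j => j < k ∧ X[j]? = X[k]?) = (fun j => j < k ∧ Y[j]? = Y[k]?) :=
    funext fun j => propext (and_congr_right (h j))
  unfold prevEntry
  congr 1
  exacts [congrArg Exists hpred, congrArg (fun p => k - sSup (Set.ofPred p)) hpred]

theorem sSup_earlier_occurrences_mem {X : List Γ} {k : ℕ} (h : ∃ j, j < k ∧ X[j]? = X[k]?) :
    sSup {j | j < k ∧ X[j]? = X[k]?} ∈ {j | j < k ∧ X[j]? = X[k]?} :=
  Nat.sSup_mem h ⟨k, fun _ hj => hj.1.le⟩

theorem prevEntry_spec {X : List Γ} {k : ℕ} (h : prevEntry X k ≠ 0) :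
    k - prevEntry X k < k ∧ X[k - prevEntry X k]? = X[k]? := by
  unfold prevEntry at h ⊢
  split_ifs at h ⊢ with hex
  · obtain ⟨hlt, heq⟩ := sSup_earlier_occurrences_mem hex
    rw [Nat.sub_sub_self hlt.le]
    exact ⟨hlt, heq⟩
  · exact absurd rfl h

theorem prevEntry_eq_zero_iff {X : List Γ} {k : ℕ} :
    prevEntry X k = 0 ↔ ∀ j < k, X[j]? ≠ X[k]? := by
  constructor
  · intro h j hj heq
    unfold prevEntry at h
    rw [if_pos ⟨j, hj, heq⟩] at h
    have := (sSup_earlier_occurrences_mem ⟨j, hj, heq⟩).1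
    omega
  · intro h
    unfold prevEntry
    rw [if_neg (by simpa using h)]

theorem prevEntry_concat_length_eq_zero_iff {X : List Γ} {a : Γ} :
    prevEntry (X ++ [a]) X.length = 0 ↔ a ∉ X := by
  simp +contextual [prevEntry_eq_zero_iff, List.getElem?_append_left, List.mem_iff_getElem?,
    List.getElem?_eq_some_iff]

theorem prevEnc_concat (X : List Γ) (a : Γ) :
    prevEnc (X ++ [a]) = prevEnc X ++ [prevEntry (X ++ [a]) X.length] := by
  rw [prevEnc_eq_map_prevEntry, prevEnc_eq_map_prevEntry, List.length_append,
    List.length_singleton, List.range_succ, List.map_append, List.map_singleton]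
  congr 1
  refine List.map_congr_left fun k hk => prevEntry_congr fun j hj => ?_
  have hk := List.mem_range.mp hk
  rw [List.getElem?_append_left (hj.trans hk), List.getElem?_append_left hk]

theorem prevEnc_take (X : List Γ) (i : ℕ) : prevEnc (X.take i) = (prevEnc X).take i := by
  rw [prevEnc_eq_map_prevEntry, prevEnc_eq_map_prevEntry, ← List.map_take, List.take_range,
    List.length_take]
  refine List.map_congr_left fun k hk => prevEntry_congr fun j hj => ?_
  have hk : k < i := (List.mem_range.mp hk).trans_le (min_le_left _ _)
  rw [List.getElem?_take_of_lt (hj.trans hk), List.getElem?_take_of_lt hk]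

theorem prevEnc_map {f : Γ → Γ'} (hf : Function.Injective f) (X : List Γ) :
    prevEnc (X.map f) = prevEnc X := by
  rw [prevEnc_eq_map_prevEntry, prevEnc_eq_map_prevEntry, List.length_map]
  refine List.map_congr_left fun k _ => prevEntry_congr fun j _ => ?_
  rw [List.getElem?_map, List.getElem?_map, (Option.map_injective hf).eq_iff]

theorem getElem?_length_sub_prevEntry_concat {X : List Γ} {a : Γ}
    (h : prevEntry (X ++ [a]) X.length ≠ 0) :
    X[X.length - prevEntry (X ++ [a]) X.length]? = some a := by
  obtain ⟨hlt, heq⟩ := prevEntry_spec h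
  rwa [List.getElem?_append_left hlt, List.getElem?_concat_length] at heq

theorem exists_perm_map_concat_of_prevEntry_eq {X : List Γ} {a b : Γ} {e : Equiv.Perm Γ}
    (h : prevEntry (X ++ [a]) X.length = prevEntry (X.map e ++ [b]) X.length) :
    ∃ e' : Equiv.Perm Γ, X.map e ++ [b] = (X ++ [a]).map e' := by
  have hlen : (X.map e).length = X.length := List.length_map _
  by_cases h0 : prevEntry (X ++ [a]) X.length = 0
  · have ha : a ∉ X := prevEntry_concat_length_eq_zero_iff.mp h0
    have hb : b ∉ X.map e := prevEntry_concat_length_eq_zero_iff.mp (hlen ▸ h ▸ h0)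
    -- `a` is a fresh letter, so it may be sent to the fresh letter `b` without disturbing `X`
    refine ⟨e.trans (Equiv.swap (e a) b), ?_⟩
    rw [List.map_append, List.map_singleton, Equiv.trans_apply, Equiv.swap_apply_left]
    congr 1
    refine List.map_congr_left fun x hx => (Equiv.swap_apply_of_ne_of_ne ?_ ?_).symm
    · exact e.injective.ne (ne_of_mem_of_not_mem hx ha)
    · exact ne_of_mem_of_not_mem (List.mem_map_of_mem hx) hb
  · have hXa := getElem?_length_sub_prevEntry_concat h0
    have hYb := getElem?_length_sub_prevEntry_concat (hlen ▸ h ▸ h0)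
    rw [hlen, ← h, List.getElem?_map, hXa, Option.map_some, Option.some_inj] at hYb
    refine ⟨e, ?_⟩
    rw [List.map_append, List.map_singleton, hYb]

theorem exists_perm_of_prevEnc_eq {X Y : List Γ} (h : prevEnc X = prevEnc Y) :
    ∃ e : Equiv.Perm Γ, Y = X.map e := by
  induction X using List.reverseRecOn generalizing Y with
  | nil =>
    obtain rfl : Y = [] := List.length_eq_zero_iff.mp (by simpa using congrArg List.length h.symm)
    exact ⟨1, rfl⟩
  | append_singleton X a ih =>
    obtain rfl | ⟨Y, b, rfl⟩ := Y.eq_nil_or_concat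
    · simpa using congrArg List.length h
    rw [List.concat_eq_append] at h ⊢
    rw [prevEnc_concat, prevEnc_concat, List.append_singleton_inj] at h
    obtain ⟨hprefix, hlast⟩ := h
    obtain ⟨e, rfl⟩ := ih hprefix
    rw [List.length_map] at hlast
    exact exists_perm_map_concat_of_prevEntry_eq hlast

end

/-- The prev-encoding characterizes parameterized matching:
`prev(X) = prev(Y)` iff there is a bijection `π : Π → Π` with `Y = π(X)`
pointwise.  Together with the length and prefix conditions, the prev-encoding
is therefore a prefix encoding with respect to the parameterized-matching
relation. -/
theorem prevEnc_prefix_encoding {Γ : Type*} :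
    (∀ X : List Γ, (prevEnc X).length = X.length) ∧
    (∀ (X : List Γ) (i : ℕ), 1 ≤ i → i ≤ X.length →
      prevEnc (X.take i) = (prevEnc X).take i) ∧
    (∀ X Y : List Γ, prevEnc X = prevEnc Y ↔
      ∃ e : Equiv.Perm Γ, Y = X.map ⇑e) := by
  refine ⟨length_prevEnc, fun X i _ _ => prevEnc_take X i, fun X Y => ?_⟩
  refine ⟨exists_perm_of_prevEnc_eq, ?_⟩
  rintro ⟨e, rfl⟩
  exact (prevEnc_map e.injective X).symm
end

section
/- (Well-definedness of the output function.) Let ≈ be an SCER on strings over Σ, f a prefix encoding with respect to ≈, and D a dictionary. If P, P' ∈ D, 1 ≤ j ≤ |P|, 1 ≤ j' ≤ |P'|, and f(P)[:j] = f(P')[:j'], then {Q ∈ D | Q ≈ P[i:j] for some 1 ≤ i ≤ j} = {Q ∈ D | Q ≈ P'[i':j'] for some 1 ≤ i' ≤ j'}; that is, the output set Out depends only on the state f(P)[:j] and not on the representative pattern and position. -/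
/-!
Equal states `f(P)[:j] = f(P')[:j']` have equal length, so `j = j'`, and since `f` commutes with
taking prefixes and is injective modulo `≈`, they give `P[:j] ≈ P'[:j]`. Substring consistency
applied to these prefixes yields `P[i:j] ≈ P'[i:j]` for every `1 ≤ i ≤ j`, so by transitivity a
pattern is equivalent to some `P[i:j]` exactly when it is equivalent to some `P'[i:j]`.
-/

theorem seg_take_of_le {σ : Type*} (X : List σ) {i j n : ℕ} (h : j ≤ n) :
    seg (X.take n) i j = seg X i j := by
  simp only [seg, List.take_take, Nat.min_eq_left h]

theorem eq_of_take_eq_take {α : Type*} {L L' : List α} {j j' : ℕ} (hj : j ≤ L.length)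
    (hj' : j' ≤ L'.length) (h : L.take j = L'.take j') : j = j' := by
  simpa [List.length_take, hj, hj'] using congrArg List.length h

section

variable {σ : Type*} {R : List σ → List σ → Prop}

theorem rel_take_of_take_eq_take {π : Type*} {f : List σ → List π}
    (hf2 : ∀ (X : List σ) (i : ℕ), 1 ≤ i → i ≤ X.length → f (X.take i) = (f X).take i)
    (hf3 : ∀ X Y, f X = f Y → R X Y) {X Y : List σ} {j : ℕ} (hj : 1 ≤ j)
    (hjX : j ≤ X.length) (hjY : j ≤ Y.length) (h : (f X).take j = (f Y).take j) :
    R (X.take j) (Y.take j) :=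
  hf3 _ _ (by rw [hf2 X j hj hjX, hf2 Y j hj hjY, h])

theorem rel_seg_of_rel_take
    (hsub : ∀ X Y, R X Y → ∀ i j, 1 ≤ i → i ≤ j → j ≤ X.length →
      R (seg X i j) (seg Y i j))
    {X Y : List σ} {j : ℕ} (hjX : j ≤ X.length) (hXY : R (X.take j) (Y.take j))
    {i : ℕ} (hi : 1 ≤ i) (hij : i ≤ j) : R (seg X i j) (seg Y i j) := by
  have h := hsub _ _ hXY i j hi hij (by simpa using hjX)
  rwa [seg_take_of_le X le_rfl, seg_take_of_le Y le_rfl] at h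

theorem setOf_rel_seg_eq_of_rel_take (hequiv : Equivalence R)
    (hsub : ∀ X Y, R X Y → ∀ i j, 1 ≤ i → i ≤ j → j ≤ X.length →
      R (seg X i j) (seg Y i j))
    (D : Finset (List σ)) {X Y : List σ} {j : ℕ} (hjX : j ≤ X.length)
    (hXY : R (X.take j) (Y.take j)) :
    {Q | Q ∈ D ∧ ∃ i, 1 ≤ i ∧ i ≤ j ∧ R Q (seg X i j)} =
      {Q | Q ∈ D ∧ ∃ i, 1 ≤ i ∧ i ≤ j ∧ R Q (seg Y i j)} := by
  ext Q
  refine and_congr_right fun _ => exists_congr fun i =>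
    and_congr_right fun hi => and_congr_right fun hij => ?_
  have hseg := rel_seg_of_rel_take hsub hjX hXY hi hij
  exact ⟨fun hQ => hequiv.trans hQ hseg, fun hQ => hequiv.trans hQ (hequiv.symm hseg)⟩

end

theorem out_well_defined_general {σ π : Type*} (R : List σ → List σ → Prop)
    (hequiv : Equivalence R)
    (hsub : ∀ X Y, R X Y → ∀ i j, 1 ≤ i → i ≤ j → j ≤ X.length →
      R (seg X i j) (seg Y i j))
    (f : List σ → List π)
    (hf1 : ∀ X, (f X).length = X.length)
    (hf2 : ∀ (X : List σ) (i : ℕ), 1 ≤ i → i ≤ X.length →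
      f (X.take i) = (f X).take i)
    (hf3 : ∀ X Y, f X = f Y ↔ R X Y)
    (D : Finset (List σ))
    (P P' : List σ) (j j' : ℕ)
    (hj : 1 ≤ j) (hjP : j ≤ P.length) (hj'P : j' ≤ P'.length)
    (heq : (f P).take j = (f P').take j') :
    {Q | Q ∈ D ∧ ∃ i, 1 ≤ i ∧ i ≤ j ∧ R Q (seg P i j)} =
      {Q | Q ∈ D ∧ ∃ i', 1 ≤ i' ∧ i' ≤ j' ∧ R Q (seg P' i' j')} := by
  obtain rfl : j = j' :=
    eq_of_take_eq_take ((hf1 P).symm ▸ hjP) ((hf1 P').symm ▸ hj'P) heq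
  exact setOf_rel_seg_eq_of_rel_take hequiv hsub D hjP
    (rel_take_of_take_eq_take hf2 (fun X Y => (hf3 X Y).mp) hj hjP hj'P heq)

/-- Well-definedness of the output function.  Let `R` be an SCER, `f` a prefix
encoding w.r.t. `R`, and `D` a dictionary.  If `P, P' ∈ D`, `1 ≤ j ≤ |P|`,
`1 ≤ j' ≤ |P'|` and `f(P)[:j] = f(P')[:j']`, then
`{Q ∈ D | Q ≈ P[i:j] for some 1 ≤ i ≤ j} =
 {Q ∈ D | Q ≈ P'[i':j'] for some 1 ≤ i' ≤ j'}`;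
the output set depends only on the state. -/
theorem out_well_defined {σ π : Type*} (R : List σ → List σ → Prop)
    (hequiv : Equivalence R)
    (hlen : ∀ X Y, R X Y → X.length = Y.length)
    (hsub : ∀ X Y, R X Y → ∀ i j, 1 ≤ i → i ≤ j → j ≤ X.length →
      R (seg X i j) (seg Y i j))
    (f : List σ → List π)
    (hf1 : ∀ X, (f X).length = X.length)
    (hf2 : ∀ (X : List σ) (i : ℕ), 1 ≤ i → i ≤ X.length →
      f (X.take i) = (f X).take i)
    (hf3 : ∀ X Y, f X = f Y ↔ R X Y)
    (D : Finset (List σ))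
    (P P' : List σ) (hP : P ∈ D) (hP' : P' ∈ D) (j j' : ℕ)
    (hj : 1 ≤ j) (hjP : j ≤ P.length) (hj' : 1 ≤ j') (hj'P : j' ≤ P'.length)
    (heq : (f P).take j = (f P').take j') :
    {Q | Q ∈ D ∧ ∃ i, 1 ≤ i ∧ i ≤ j ∧ R Q (seg P i j)} =
      {Q | Q ∈ D ∧ ∃ i', 1 ≤ i' ∧ i' ≤ j' ∧ R Q (seg P' i' j')} :=
  out_well_defined_general R hequiv hsub f hf1 hf2 hf3 D P P' j j' hj hjP hj'P heq
end
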